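/- For any peak Λ ≤ 1/2, if in a strategy profile σ of a swap Schelling game (G,b,Λ) two agents i and j with f_i(σ) < Λ and f_j(σ) > Λ perform a profitable swap, then the degree of the node occupied by i strictly exceeds the degree of the node occupied by j, i.e., δ(σ(i)) > δ(σ(j)). -/

import Mathlib

open Finset

namespace SwapSchelling

variable {V : Type*} [Fintype V] [DecidableEq V]

open scoped Classical in
/-- The closed neighborhood `N[v]` of a node `v` in `G`, as a `Finset`. -/
noncomputable def closedNbhd (G : SimpleGraph V) (v : V) : Finset V :=
  univ.filter (fun u => u = v ∨ G.Adj v u)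

open scoped Classical in
/-- The degree `δ(v)` of a node `v` in `G`. -/
noncomputable def deg (G : SimpleGraph V) (v : V) : ℕ :=
  (univ.filter (fun u => G.Adj v u)).card

/-- The maximum degree `Δ(G)`. -/
noncomputable def maxDeg (G : SimpleGraph V) : ℕ := univ.sup (deg G)

/-- The minimum degree `δ(G)`. -/
noncomputable def minDeg (G : SimpleGraph V) : ℕ := sInf (Set.range (deg G))

open scoped Classical in
/-- `frac G c v` is the fraction of nodes in the closed neighborhood of `v` that have
the same color as `v` (that is, `f_i(σ)` for the agent `i` occupying node `v`). -/
noncomputable def frac (G : SimpleGraph V) (c : V → Bool) (v : V) : ℝ :=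
  (((closedNbhd G v).filter (fun u => c u = c v)).card : ℝ) / ((closedNbhd G v).card : ℝ)

/-- The coloring obtained from `c` after the agents on nodes `v` and `w` swap positions. -/
def swapColor (c : V → Bool) (v w : V) : V → Bool := c ∘ Equiv.swap v w

/-- A single-peaked utility function `p` with peak at `Λ`: `p 0 = 0`, `p` is strictly
increasing on `[0,Λ]`, `p Λ = 1`, and `p x = p (Λ(1-x)/(1-Λ))` for `x ∈ [Λ,1]`. -/
structure IsSinglePeaked (p : ℝ → ℝ) (Λ : ℝ) : Prop where
  peak_mem : Λ ∈ Set.Ioo (0 : ℝ) 1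
  map_zero : p 0 = 0
  strictMonoOn : StrictMonoOn p (Set.Icc 0 Λ)
  map_peak : p Λ = 1
  symm : ∀ x ∈ Set.Icc Λ 1, p x = p (Λ * (1 - x) / (1 - Λ))

/-- A strategy profile: a 2-coloring of the nodes with exactly `b` blue (`true`) nodes. -/
def IsProfile (c : V → Bool) (b : ℕ) : Prop :=
  (univ.filter (fun v => c v = true)).card = b

/-- The structural data of a swap Schelling game `(G, b, Λ)` with utility function `p`:
`G` is connected, there are `b` blue agents with `1 ≤ b ≤ n/2`, and `p` is a
single-peaked utility function with peak `Λ`. -/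
structure IsGame (G : SimpleGraph V) (b : ℕ) (Λ : ℝ) (p : ℝ → ℝ) : Prop where
  connected : G.Connected
  one_le_b : 1 ≤ b
  b_le_half : 2 * b ≤ Fintype.card V
  singlePeaked : IsSinglePeaked p Λ

/-- The swap of the two (differently colored) agents occupying nodes `v` and `w`
is profitable: both agents strictly increase their utility. -/
def ProfitableSwap (G : SimpleGraph V) (p : ℝ → ℝ) (c : V → Bool) (v w : V) : Prop :=
  c v ≠ c w ∧
  p (frac G (swapColor c v w) w) > p (frac G c v) ∧
  p (frac G (swapColor c v w) v) > p (frac G c w)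

/-- A swap equilibrium: no profitable swap exists. -/
def IsSwapEquilibrium (G : SimpleGraph V) (p : ℝ → ℝ) (c : V → Bool) : Prop :=
  ∀ v w, ¬ ProfitableSwap G p c v w

open scoped Classical in
/-- The degree of integration: the number of non-segregated agents. -/
noncomputable def DoI (G : SimpleGraph V) (c : V → Bool) : ℕ :=
  (univ.filter (fun v => frac G c v ≠ 1)).card

open scoped Classical in
/-- The number of monochromatic edges of `G` under the coloring `c`. -/
noncomputable def Phi (G : SimpleGraph V) (c : V → Bool) : ℕ :=
  (G.edgeFinset.filter (fun e => ∀ u ∈ e, ∀ w ∈ e, c u = c w)).card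

open scoped Classical in
/-- The number of edges of `G`. -/
noncomputable def numEdges (G : SimpleGraph V) : ℕ :=
  (univ.filter (fun e : Sym2 V => e ∈ G.edgeSet)).card

/-- A finset of nodes is an independent set of `G`. -/
def IsIndepSet (G : SimpleGraph V) (s : Finset V) : Prop :=
  ∀ u ∈ s, ∀ w ∈ s, ¬ G.Adj u w

open scoped Classical in
/-- The independence number `α(G)`. -/
noncomputable def indepNum (G : SimpleGraph V) : ℕ :=
  univ.sup (fun s : Finset V => if IsIndepSet G s then s.card else 0)

open scoped Classical in
/-- The degree of `v` inside the subgraph of `G` induced by the node set `s`. -/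
noncomputable def degOn (G : SimpleGraph V) (s : Finset V) (v : V) : ℕ :=
  (s.filter (fun u => G.Adj v u)).card

/-!
Write `x = f(v)`, `y = f(w)` and `d(u) = δ(u) + 1`. After the swap the agent from `v` sees the
fraction `1 - y + ε(w)` at `w`, and the agent from `w` sees `1 - x + ε(v)` at `v`, where
`ε(u) = 1 / d(u)` if `v` and `w` are not adjacent and `ε(u) = 0` if they are. Since `x < Λ`, a
gain for the first agent forces `x < 1 - y + ε(w)`. Since `Λ ≤ 1/2`, the second agent lands at
`1 - x + ε(v) > 1 - Λ ≥ Λ`, on the decreasing side of the peak, so a gain forces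
`1 - x + ε(v) < y`. Together `ε(v) < ε(w)`: the nodes are not adjacent and `d(w) < d(v)`.
-/

lemma swapColor_comm {V : Type*} [DecidableEq V] (c : V → Bool) (v w : V) :
    swapColor c v w = swapColor c w v := by
  rw [swapColor, swapColor, Equiv.swap_comm]

namespace IsSinglePeaked

variable {p : ℝ → ℝ} {Λ : ℝ}

lemma lt_of_map_lt_of_le_peak (hp : IsSinglePeaked p Λ) {x z : ℝ} (hx₀ : 0 ≤ x) (hxΛ : x ≤ Λ)
    (hz₀ : 0 ≤ z) (h : p x < p z) : x < z := by
  by_contra! hzx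
  exact (hp.strictMonoOn.monotoneOn ⟨hz₀, hzx.trans hxΛ⟩ ⟨hx₀, hxΛ⟩ hzx).not_gt h

lemma lt_of_map_lt_of_peak_le (hp : IsSinglePeaked p Λ) {y z : ℝ} (hyΛ : Λ ≤ y)
    (hzΛ : Λ ≤ z) (hz₁ : z ≤ 1) (h : p y < p z) : z < y := by
  by_contra! hyz
  obtain ⟨hΛ₀, hΛ₁⟩ := hp.peak_mem
  have hreflect : ∀ t ∈ Set.Icc Λ 1, Λ * (1 - t) / (1 - Λ) ∈ Set.Icc 0 Λ := by
    rintro t ⟨htΛ, ht₁⟩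
    refine ⟨by apply div_nonneg <;> nlinarith, ?_⟩
    rw [div_le_iff₀ (by linarith)]
    nlinarith
  have hmono : Λ * (1 - z) / (1 - Λ) ≤ Λ * (1 - y) / (1 - Λ) := by
    gcongr
  rw [hp.symm y ⟨hyΛ, hyz.trans hz₁⟩, hp.symm z ⟨hzΛ, hz₁⟩] at h
  exact (hp.strictMonoOn.monotoneOn (hreflect z ⟨hzΛ, hz₁⟩)
    (hreflect y ⟨hyΛ, hyz.trans hz₁⟩) hmono).not_gt h

end IsSinglePeaked

section Swap

variable {V : Type*} [Fintype V] [DecidableEq V] (G : SimpleGraph V)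

lemma mem_closedNbhd {v u : V} : u ∈ closedNbhd G v ↔ u = v ∨ G.Adj v u := by
  simp [closedNbhd]

lemma card_closedNbhd (v : V) : (closedNbhd G v).card = deg G v + 1 := by
  classical
  have h : closedNbhd G v = insert v (univ.filter (fun u => G.Adj v u)) := by
    ext u
    simp [mem_closedNbhd]
  rw [h, card_insert_of_notMem (by simp), deg]

lemma frac_nonneg (c : V → Bool) (v : V) : 0 ≤ frac G c v := by
  unfold frac
  positivity

lemma frac_le_one (c : V → Bool) (v : V) : frac G c v ≤ 1 :=
  div_le_one_of_le₀ (by exact_mod_cast card_filter_le _ _) (Nat.cast_nonneg _)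

open scoped Classical in
lemma card_filter_swapColor_add {c : V → Bool} {v w : V} (hc : c v ≠ c w) :
    ((closedNbhd G w).filter (fun u => swapColor c v w u = swapColor c v w w)).card
        + (if G.Adj w v then 1 else 0)
      = ((closedNbhd G w).filter (fun u => c u ≠ c w)).card + 1 := by
  have hvw : v ≠ w := fun h => hc (h ▸ rfl)
  have hfilter : (closedNbhd G w).filter (fun u => swapColor c v w u = swapColor c v w w)
      = insert w (((closedNbhd G w).filter (fun u => c u ≠ c w)).erase v) := by
    ext u
    by_cases huw : u = w
    · simp [huw, mem_closedNbhd]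
    by_cases huv : u = v
    · simp [huv, swapColor, hc.symm, hvw]
    · simp only [swapColor, Function.comp_apply, Equiv.swap_apply_of_ne_of_ne huv huw,
        Equiv.swap_apply_right, mem_filter, mem_insert, mem_erase, huw]
      cases h₁ : c u <;> cases h₂ : c v <;> cases h₃ : c w <;> simp_all
  rw [hfilter, card_insert_of_notMem (by simp)]
  split_ifs with hadj
  · rw [card_erase_add_one (by simp [mem_closedNbhd, hadj, hc])]
  · rw [erase_eq_of_notMem (by simp [mem_closedNbhd, hadj, hvw])]

open scoped Classical in
lemma frac_swapColor {c : V → Bool} {v w : V} (hc : c v ≠ c w) :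
    frac G (swapColor c v w) w
      = 1 - frac G c w + (if G.Adj w v then 0 else 1 / ((deg G w : ℝ) + 1)) := by
  have hswap : (((closedNbhd G w).filter
      (fun u => swapColor c v w u = swapColor c v w w)).card : ℝ)
        + (if G.Adj w v then 1 else 0)
      = ((closedNbhd G w).filter (fun u => c u ≠ c w)).card + 1 := by
    exact_mod_cast card_filter_swapColor_add G hc
  have hsplit : (((closedNbhd G w).filter (fun u => c u = c w)).card : ℝ)
      + ((closedNbhd G w).filter (fun u => c u ≠ c w)).card = deg G w + 1 := by
    exact_mod_cast (card_filter_add_card_filter_not _).trans (card_closedNbhd G w)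
  unfold frac
  rw [card_closedNbhd]
  push_cast
  split_ifs at hswap ⊢ <;> field_simp <;> linarith

end Swap

theorem profitable_swap_degree_lt_general
    {V : Type*} [Fintype V] [DecidableEq V] (G : SimpleGraph V) (b : ℕ) (Λ : ℝ) (p : ℝ → ℝ)
    (hgame : IsGame G b Λ p) (hΛ : Λ ≤ 1 / 2)
    (c : V → Bool) (v w : V)
    (hv : frac G c v < Λ) (hw : Λ < frac G c w)
    (hswap : ProfitableSwap G p c v w) :
    deg G w < deg G v := by
  classical
  obtain ⟨hc, hgain_v, hgain_w⟩ := hswap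
  have hp := hgame.singlePeaked
  have hfrac_w := frac_swapColor G hc
  have hfrac_v : frac G (swapColor c v w) v
      = 1 - frac G c v + (if G.Adj v w then 0 else 1 / ((deg G v : ℝ) + 1)) := by
    rw [swapColor_comm]
    exact frac_swapColor G hc.symm
  have hε_v : 0 ≤ (if G.Adj v w then 0 else 1 / ((deg G v : ℝ) + 1)) := by
    split_ifs <;> positivity
  have hlt_w : frac G c v < frac G (swapColor c v w) w :=
    hp.lt_of_map_lt_of_le_peak (frac_nonneg G c v) hv.le (frac_nonneg G _ w) hgain_v
  have hlt_v : frac G (swapColor c v w) v < frac G c w :=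
    hp.lt_of_map_lt_of_peak_le hw.le (by rw [hfrac_v]; linarith) (frac_le_one G _ v) hgain_w
  rw [hfrac_w] at hlt_w
  rw [hfrac_v] at hlt_v
  by_cases hadj : G.Adj v w
  · simp only [hadj, hadj.symm, if_true] at hlt_v hlt_w
    linarith
  · have hadj' : ¬ G.Adj w v := fun h => hadj h.symm
    simp only [hadj, hadj', if_false] at hlt_v hlt_w
    have hinv : 1 / ((deg G v : ℝ) + 1) < 1 / ((deg G w : ℝ) + 1) := by linarith
    rw [one_div_lt_one_div (by positivity) (by positivity)] at hinv
    exact_mod_cast (add_lt_add_iff_right 1).mp hinv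

/-- For any peak `Λ ≤ 1/2`, a profitable swap between an agent below the
peak and an agent above the peak requires that the node of the former has strictly
larger degree than the node of the latter. -/
theorem profitable_swap_degree_lt
    {V : Type*} [Fintype V] [DecidableEq V] (G : SimpleGraph V) (b : ℕ) (Λ : ℝ) (p : ℝ → ℝ)
    (hgame : IsGame G b Λ p) (hΛ : Λ ≤ 1 / 2)
    (c : V → Bool) (hc : IsProfile c b) (v w : V)
    (hv : frac G c v < Λ) (hw : Λ < frac G c w)
    (hswap : ProfitableSwap G p c v w) :
    deg G w < deg G v :=
  profitable_swap_degree_lt_general G b Λ p hgame hΛ c v w hv hw hswap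

end SwapSchelling
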